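/- Combined cancellation identity: Let d ≥ 1, let f : ℝ^d → ℝ be of class C², and let v : ℝ^d → ℂ be of class C². Define the pointwise expressions A₂ = Re(Δv̄ · (i f v)) + Re(v̄ · Δ(i f v)), A₃ = 2 Re(∇v̄ · ∇(i f v)), and A₄ = 2 Re(v̄ · conj(i f v) · (∇v·∇v)) + 2 Re(v̄² · (∇v · ∇(i f v))). Then |v(x)|² · (2 A₂(x) + 3 A₃(x)) + A₄(x) = 0 for every x ∈ ℝ^d. -/

import Mathlib

open Complex ComplexConjugate

/-- `j`-th partial derivative of a complex-valued function on `ℝ^d`. -/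
noncomputable def pdC {d : ℕ} (j : Fin d) (w : (Fin d → ℝ) → ℂ) (x : Fin d → ℝ) : ℂ :=
  fderiv ℝ w x (Pi.single j 1)

/-- Laplacian of a complex-valued function on `ℝ^d`. -/
noncomputable def lapC {d : ℕ} (w : (Fin d → ℝ) → ℂ) (x : Fin d → ℝ) : ℂ :=
  ∑ j, pdC j (fun y => pdC j w y) x

/-- Gradient dot product `∇w·∇z` of complex-valued functions on `ℝ^d`. -/
noncomputable def gdotC {d : ℕ} (w z : (Fin d → ℝ) → ℂ) (x : Fin d → ℝ) : ℂ :=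
  ∑ j, pdC j w x * pdC j z x

/-- `j`-th partial derivative of a real-valued function on `ℝ^d`. -/
noncomputable def pdR {d : ℕ} (j : Fin d) (w : (Fin d → ℝ) → ℝ) (x : Fin d → ℝ) : ℝ :=
  fderiv ℝ w x (Pi.single j 1)

/-- Laplacian of a real-valued function on `ℝ^d`. -/
noncomputable def lapR {d : ℕ} (w : (Fin d → ℝ) → ℝ) (x : Fin d → ℝ) : ℝ :=
  ∑ j, pdR j (fun y => pdR j w y) x

/-- Gradient dot product `∇w·∇z` of real-valued functions on `ℝ^d`. -/
noncomputable def gdotR {d : ℕ} (w z : (Fin d → ℝ) → ℝ) (x : Fin d → ℝ) : ℝ :=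
  ∑ j, pdR j w x * pdR j z x

/-!
Expand every term by the Leibniz rule and write `S = ∇f·∇v`. In `A₂` and `A₃` the terms carrying
`f` or `Δf` are real parts of `i` times a real number, and in `A₄` the two terms carrying `f`
cancel. What survives is `A₂ = -2 Im(v̄ S)`, `A₃ = 2 Im(v̄ S)` and `A₄ = -2 |v|² Im(v̄ S)`, so
`|v|² (2 A₂ + 3 A₃) + A₄ = (-4 + 6 - 2) |v|² Im(v̄ S) = 0`.
-/

section PartialDerivatives

variable {d : ℕ} (j : Fin d) (x : Fin d → ℝ)

lemma pdC_add {w z : (Fin d → ℝ) → ℂ} (hw : DifferentiableAt ℝ w x)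
    (hz : DifferentiableAt ℝ z x) :
    pdC j (fun y => w y + z y) x = pdC j w x + pdC j z x := by
  simp [pdC, fderiv_fun_add hw hz]

lemma pdC_mul {w z : (Fin d → ℝ) → ℂ} (hw : DifferentiableAt ℝ w x)
    (hz : DifferentiableAt ℝ z x) :
    pdC j (fun y => w y * z y) x = pdC j w x * z x + w x * pdC j z x := by
  simp only [pdC, fderiv_fun_mul hw hz, add_apply, smul_apply, smul_eq_mul]
  ring

lemma pdC_const_mul {w : (Fin d → ℝ) → ℂ} (c : ℂ) (hw : DifferentiableAt ℝ w x) :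
    pdC j (fun y => c * w y) x = c * pdC j w x := by
  simp [pdC, fderiv_const_mul hw c]

lemma pdC_conj (w : (Fin d → ℝ) → ℂ) :
    pdC j (fun y => conj (w y)) x = conj (pdC j w x) := by
  change fderiv ℝ (fun y => star (w y)) x _ = star _
  rw [fderiv_star]
  rfl

lemma pdC_ofReal {g : (Fin d → ℝ) → ℝ} (hg : DifferentiableAt ℝ g x) :
    pdC j (fun y => (g y : ℂ)) x = pdR j g x := by
  change fderiv ℝ (ofRealCLM ∘ g) x _ = _
  rw [(ofRealCLM.hasFDerivAt.comp x hg.hasFDerivAt).fderiv]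
  rfl

lemma differentiable_pdC {w : (Fin d → ℝ) → ℂ} (hw : ContDiff ℝ 2 w) :
    Differentiable ℝ (pdC j w) :=
  ((hw.fderiv_right (by norm_num)).differentiable one_ne_zero).clm_apply
    (differentiable_const _)

lemma differentiable_pdR {g : (Fin d → ℝ) → ℝ} (hg : ContDiff ℝ 2 g) :
    Differentiable ℝ (pdR j g) :=
  ((hg.fderiv_right (by norm_num)).differentiable one_ne_zero).clm_apply
    (differentiable_const _)

end PartialDerivatives

section LeibnizRule

variable {d : ℕ} (j : Fin d) (x : Fin d → ℝ) {f : (Fin d → ℝ) → ℝ} {v : (Fin d → ℝ) → ℂ}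

lemma pdC_I_mul_ofReal_mul (hf : DifferentiableAt ℝ f x) (hv : DifferentiableAt ℝ v x) :
    pdC j (fun y => I * (f y : ℂ) * v y) x = I * pdR j f x * v x + I * f x * pdC j v x := by
  rw [pdC_mul j x (by fun_prop) hv, pdC_const_mul j x I (by fun_prop), pdC_ofReal j x hf]

lemma pdC_pdC_I_mul_ofReal_mul (hf : ContDiff ℝ 2 f) (hv : ContDiff ℝ 2 v) :
    pdC j (fun y => pdC j (fun z => I * (f z : ℂ) * v z) y) x
      = I * pdR j (fun y => pdR j f y) x * v x + 2 * (I * pdR j f x * pdC j v x)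
        + I * f x * pdC j (fun y => pdC j v y) x := by
  have hf₁ := hf.differentiable two_ne_zero
  have hv₁ := hv.differentiable two_ne_zero
  have hf₂ := differentiable_pdR j hf
  have hv₂ := differentiable_pdC j hv
  simp_rw [pdC_I_mul_ofReal_mul j _ (hf₁ _) (hv₁ _)]
  rw [pdC_add j x (by fun_prop) (by fun_prop),
    pdC_I_mul_ofReal_mul j x (hf₂ x) (hv₁ x), pdC_I_mul_ofReal_mul j x (hf₁ x) (hv₂ x)]
  ring

end LeibnizRule

noncomputable def gdotRC {d : ℕ} (f : (Fin d → ℝ) → ℝ) (v : (Fin d → ℝ) → ℂ) (x : Fin d → ℝ) :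
    ℂ :=
  ∑ j, (pdR j f x : ℂ) * pdC j v x

section Expansions

variable {d : ℕ} (x : Fin d → ℝ) {f : (Fin d → ℝ) → ℝ} {v : (Fin d → ℝ) → ℂ}

lemma lapC_conj (v : (Fin d → ℝ) → ℂ) :
    lapC (fun y => conj (v y)) x = conj (lapC v x) := by
  simp only [lapC, pdC_conj, map_sum]

lemma lapC_I_mul_ofReal_mul (hf : ContDiff ℝ 2 f) (hv : ContDiff ℝ 2 v) :
    lapC (fun y => I * (f y : ℂ) * v y) x
      = I * lapR f x * v x + 2 * I * gdotRC f v x + I * f x * lapC v x := by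
  simp only [lapC, lapR, gdotRC, pdC_pdC_I_mul_ofReal_mul _ x hf hv, Finset.sum_add_distrib,
    Finset.mul_sum, Finset.sum_mul, ofReal_sum]
  congr 2
  exact Finset.sum_congr rfl fun j _ => by ring

lemma gdotC_conj_I_mul_ofReal_mul (hf : Differentiable ℝ f) (hv : Differentiable ℝ v) :
    gdotC (fun y => conj (v y)) (fun y => I * (f y : ℂ) * v y) x
      = I * v x * conj (gdotRC f v x) + I * f x * ((∑ j, normSq (pdC j v x) : ℝ) : ℂ) := by
  simp only [gdotC, gdotRC, pdC_conj, pdC_I_mul_ofReal_mul _ x (hf x) (hv x), map_sum, map_mul,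
    conj_ofReal, ofReal_sum, Finset.mul_sum, ← Finset.sum_add_distrib, ← mul_conj]
  exact Finset.sum_congr rfl fun j _ => by ring

lemma gdotC_I_mul_ofReal_mul (hf : Differentiable ℝ f) (hv : Differentiable ℝ v) :
    gdotC v (fun y => I * (f y : ℂ) * v y) x
      = I * v x * gdotRC f v x + I * f x * gdotC v v x := by
  simp only [gdotC, gdotRC, pdC_I_mul_ofReal_mul _ x (hf x) (hv x), Finset.mul_sum,
    ← Finset.sum_add_distrib]
  exact Finset.sum_congr rfl fun j _ => by ring

end Expansions

namespace CancellationTerms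

variable {d : ℕ} (f : (Fin d → ℝ) → ℝ) (v : (Fin d → ℝ) → ℂ) (x : Fin d → ℝ)

noncomputable def A₂ : ℝ :=
  (lapC (fun y => conj (v y)) x * (I * f x * v x)).re
    + (conj (v x) * lapC (fun y => I * (f y : ℂ) * v y) x).re

noncomputable def A₃ : ℝ :=
  2 * (gdotC (fun y => conj (v y)) (fun y => I * (f y : ℂ) * v y) x).re

noncomputable def A₄ : ℝ :=
  2 * (conj (v x) * conj (I * f x * v x) * gdotC v v x).re
    + 2 * (conj (v x) ^ 2 * gdotC v (fun y => I * (f y : ℂ) * v y) x).re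

variable {f v}

lemma A₂_eq (hf : ContDiff ℝ 2 f) (hv : ContDiff ℝ 2 v) :
    A₂ f v x = -2 * (conj (v x) * gdotRC f v x).im := by
  rw [A₂, lapC_conj, lapC_I_mul_ofReal_mul x hf hv]
  simp only [mul_re, mul_im, add_re, add_im, conj_re, conj_im, I_re, I_im, ofReal_re,
    ofReal_im, re_ofNat, im_ofNat]
  ring

lemma A₃_eq (hf : Differentiable ℝ f) (hv : Differentiable ℝ v) :
    A₃ f v x = 2 * (conj (v x) * gdotRC f v x).im := by
  rw [A₃, gdotC_conj_I_mul_ofReal_mul x hf hv]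
  simp only [mul_re, mul_im, add_re, conj_re, conj_im, I_re, I_im, ofReal_re, ofReal_im]
  ring

lemma A₄_eq (hf : Differentiable ℝ f) (hv : Differentiable ℝ v) :
    A₄ f v x = -2 * normSq (v x) * (conj (v x) * gdotRC f v x).im := by
  rw [A₄, gdotC_I_mul_ofReal_mul x hf hv]
  simp only [normSq_apply, pow_two, map_mul, conj_I, conj_ofReal, mul_re, mul_im, add_re,
    add_im, neg_re, neg_im, conj_re, conj_im, I_re, I_im, ofReal_re, ofReal_im]
  ring

end CancellationTerms

theorem combined_cancellation_identity_general {d : ℕ}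
    (f : (Fin d → ℝ) → ℝ) (hf : ContDiff ℝ 2 f)
    (v : (Fin d → ℝ) → ℂ) (hv : ContDiff ℝ 2 v) (x : Fin d → ℝ) :
    Complex.normSq (v x) *
        (2 * ((lapC (fun y => (starRingEnd ℂ) (v y)) x * (Complex.I * (f x : ℂ) * v x)).re
              + ((starRingEnd ℂ) (v x)
                  * lapC (fun y => Complex.I * (f y : ℂ) * v y) x).re)
          + 3 * (2 * (gdotC (fun y => (starRingEnd ℂ) (v y))
                  (fun y => Complex.I * (f y : ℂ) * v y) x).re))
      + (2 * ((starRingEnd ℂ) (v x) * (starRingEnd ℂ) (Complex.I * (f x : ℂ) * v x)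
                * gdotC v v x).re
          + 2 * (((starRingEnd ℂ) (v x)) ^ 2
                * gdotC v (fun y => Complex.I * (f y : ℂ) * v y) x).re) = 0 := by
  have hf₁ := hf.differentiable two_ne_zero
  have hv₁ := hv.differentiable two_ne_zero
  change normSq (v x) * (2 * CancellationTerms.A₂ f v x + 3 * CancellationTerms.A₃ f v x)
    + CancellationTerms.A₄ f v x = 0
  rw [CancellationTerms.A₂_eq x hf hv, CancellationTerms.A₃_eq x hf₁ hv₁,
    CancellationTerms.A₄_eq x hf₁ hv₁]
  ring

/-- **Combined cancellation identity**:
`|v|² (2 A₂ + 3 A₃) + A₄ = 0` pointwise, where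
`A₂ = Re(Δv̄ · (i f v)) + Re(v̄ · Δ(i f v))`,
`A₃ = 2 Re(∇v̄ · ∇(i f v))`, and
`A₄ = 2 Re(v̄ · conj(i f v) · (∇v·∇v)) + 2 Re(v̄² · (∇v · ∇(i f v)))`. -/
theorem combined_cancellation_identity {d : ℕ} (hd : 1 ≤ d)
    (f : (Fin d → ℝ) → ℝ) (hf : ContDiff ℝ 2 f)
    (v : (Fin d → ℝ) → ℂ) (hv : ContDiff ℝ 2 v) (x : Fin d → ℝ) :
    Complex.normSq (v x) *
        (2 * ((lapC (fun y => (starRingEnd ℂ) (v y)) x * (Complex.I * (f x : ℂ) * v x)).re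
              + ((starRingEnd ℂ) (v x)
                  * lapC (fun y => Complex.I * (f y : ℂ) * v y) x).re)
          + 3 * (2 * (gdotC (fun y => (starRingEnd ℂ) (v y))
                  (fun y => Complex.I * (f y : ℂ) * v y) x).re))
      + (2 * ((starRingEnd ℂ) (v x) * (starRingEnd ℂ) (Complex.I * (f x : ℂ) * v x)
                * gdotC v v x).re
          + 2 * (((starRingEnd ℂ) (v x)) ^ 2
                * gdotC v (fun y => Complex.I * (f y : ℂ) * v y) x).re) = 0 :=
  combined_cancellation_identity_general f hf v hv x
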